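/- Let n ≥ 2 and let F : ℝ^n → ℝ be a nonnegative bounded Borel function that is S_n-invariant, invariant under diagonal translations, and supported in {x : max_{i,j}|x_i − x_j| ≤ α}. Define on the torus group T(N) of diagonal unitary N×N matrices the random variable Z[n,F,T(N)](A) = (1/N) Σ_{T ⊆ {1,…,N}, #T = n} F((N/2π)·pr_T(X(A))), where X(A) is the angle vector of A and pr_T the projection to the coordinates in T. Then for all N ≥ 2, |E(Z[n,F,T(N)])| ≤ ‖F‖_sup · α^{n−1}/(n−1)!. -/

import Mathlib

/-!
All `N.choose n` summands of `Z` have the same law: the marginal of the product of uniform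
measures on `[0, 2π)` along `n` distinct coordinates is again such a product. Hence
`E Z = (N.choose n / N) ∫ F (N y / 2π) dy` against the normalized Lebesgue measure on the cube
`[0, 2π)ⁿ`. The integrand is at most `C` and vanishes off the strip `Δ(n, 2πα / N)`. Splitting
according to which coordinate is smallest covers the part of `Δ(n, β)` inside `[0, L)ⁿ` by `n`
slabs of volume `L βⁿ⁻¹`, and `N.choose n ≤ Nⁿ / n!` finishes the estimate.
-/

open MeasureTheory
open scoped ENNReal

/-- The Haar probability measure on the torus `T(N)` of diagonal unitary matrices,
realized as normalized Lebesgue measure on the cube of angle vectors `[0,2π)^N`. -/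
noncomputable def haarTN (N : ℕ) : Measure (Fin N → ℝ) :=
  (ENNReal.ofReal ((2 * Real.pi) ^ N))⁻¹ •
    volume.restrict (Set.univ.pi fun _ => Set.Ico (0 : ℝ) (2 * Real.pi))

/-- The random variable `Z[n,F,T(N)](A) = (1/N) ∑_{T ⊆ {1,…,N}, #T = n} F((N/2π)·pr_T(X(A)))`,
where `X(A)` is the angle vector of `A` and `pr_T` the projection to the coordinates in
`T` (taken in increasing order; `F` is symmetric so the order is irrelevant). -/
noncomputable def Zrv (n N : ℕ) (F : (Fin n → ℝ) → ℝ) (A : Fin N → ℝ) : ℝ :=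
  (1 / (N : ℝ)) *
    ∑ T ∈ (Finset.powersetCard n (Finset.univ : Finset (Fin N))).attach,
      F fun i => ((N : ℝ) / (2 * Real.pi)) *
        A ((T.1.orderIsoOfFin (Finset.mem_powersetCard.mp T.2).2) i)

open ProbabilityTheory Set

namespace MeasureTheory

theorem measurePreserving_comp_of_injective {ι κ X : Type*} [Fintype ι] [Fintype κ]
    [MeasurableSpace X] (ν : Measure X) [IsProbabilityMeasure ν] {e : ι → κ}
    (he : Function.Injective e) :
    MeasurePreserving (fun A : κ → X => A ∘ e) (Measure.pi fun _ => ν)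
      (Measure.pi fun _ => ν) := by
  classical
  refine ⟨by fun_prop, (Measure.pi_eq fun s hs => ?_).symm⟩
  have hpre : (fun A : κ → X => A ∘ e) ⁻¹' univ.pi s =
      univ.pi (Function.extend e s fun _ => univ) := by
    ext A
    simp only [mem_preimage, mem_univ_pi, Function.comp_apply]
    refine ⟨fun h j => ?_, fun h i => by simpa [he.extend_apply] using h (e i)⟩
    by_cases hj : ∃ i, e i = j
    · obtain ⟨i, rfl⟩ := hj
      simpa [he.extend_apply] using h i
    · simp [Function.extend_apply' _ _ _ hj]
  rw [Measure.map_apply (by fun_prop) (.univ_pi hs), hpre, Measure.pi_pi]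
  refine (Fintype.prod_of_injective e he _ _ (fun j hj => ?_) fun i => by
    rw [he.extend_apply]).symm
  rw [Function.extend_apply' _ _ _ (by simpa using hj), measure_univ]

theorem Measure.pi_cond {ι : Type*} [Fintype ι] {α : ι → Type*}
    [∀ i, MeasurableSpace (α i)] (μ : ∀ i, Measure (α i)) [∀ i, SigmaFinite (μ i)]
    {s : ∀ i, Set (α i)} (hs : ∀ i, μ i (s i) ≠ ∞) :
    Measure.pi (fun i => (μ i)[|s i]) = (Measure.pi μ)[|univ.pi s] := by
  refine Measure.pi_eq fun t ht => ?_
  rw [cond_apply' (.univ_pi ht), ← pi_inter_distrib, Measure.pi_pi, Measure.pi_pi,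
    ENNReal.prod_inv_distrib, ← Finset.prod_mul_distrib]
  · simp only [cond_apply' (ht _)]
  · exact fun i _ j _ _ => Or.inr (hs j)

end MeasureTheory

/-- The paper's `Δ(n, β)`. -/
def diagonalStrip (n : ℕ) (β : ℝ) : Set (Fin n → ℝ) := {x | ∀ i j, |x i - x j| ≤ β}

theorem mul_mem_diagonalStrip_iff {n : ℕ} {c α : ℝ} (hc : 0 < c) (y : Fin n → ℝ) :
    (fun i => c * y i) ∈ diagonalStrip n α ↔ y ∈ diagonalStrip n (α / c) := by
  simp [diagonalStrip, ← mul_sub, abs_mul, abs_of_pos hc, le_div_iff₀ hc, mul_comm]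

def slabAbove {m : ℕ} (k : Fin (m + 1)) (L β : ℝ) : Set (Fin (m + 1) → ℝ) :=
  {x | x k ∈ Ico 0 L ∧ ∀ j, x (k.succAbove j) ∈ Icc (x k) (x k + β)}

theorem volume_slabAbove {m : ℕ} (k : Fin (m + 1)) (L β : ℝ) :
    volume (slabAbove k L β) = ENNReal.ofReal L * ENNReal.ofReal β ^ m := by
  set S : Set (ℝ × (Fin m → ℝ)) :=
    {p | p.1 ∈ Ico 0 L ∧ ∀ j, p.2 j ∈ Icc p.1 (p.1 + β)}
  have hS : MeasurableSet S := by
    simp only [S, mem_Ico, mem_Icc, ofPred_and, ofPred_forall]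
    measurability
  have hslice : ∀ t, volume (Prod.mk t ⁻¹' S) =
      (Ico 0 L).indicator (fun _ => ENNReal.ofReal β ^ m) t := by
    intro t
    by_cases ht : t ∈ Ico 0 L
    · have : Prod.mk t ⁻¹' S = univ.pi fun _ => Icc t (t + β) := by
        ext y
        simp only [S, mem_preimage, mem_ofPred_eq, mem_univ_pi, ht, true_and]
      rw [this, volume_pi_pi]
      simp [indicator_of_mem ht]
    · have : Prod.mk t ⁻¹' S = ∅ := by
        ext y
        simp only [S, mem_preimage, mem_ofPred_eq, ht, false_and, mem_empty_iff_false]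
      simp [this, ht]
  calc volume (slabAbove k L β)
      = volume ((MeasurableEquiv.piFinSuccAbove (fun _ => ℝ) k) ⁻¹' S) := rfl
    _ = volume S := (volume_preserving_piFinSuccAbove (fun _ => ℝ) k).measure_preimage_equiv S
    _ = ENNReal.ofReal L * ENNReal.ofReal β ^ m := by
      rw [Measure.volume_eq_prod, Measure.prod_apply hS, lintegral_congr hslice,
        lintegral_indicator_const measurableSet_Ico, Real.volume_Ico, sub_zero, mul_comm]

theorem diagonalStrip_inter_cube_subset (m : ℕ) (L β : ℝ) :
    diagonalStrip (m + 1) β ∩ univ.pi (fun _ => Ico 0 L) ⊆ ⋃ k, slabAbove k L β := by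
  rintro x ⟨hx, hcube⟩
  obtain ⟨k, -, hk⟩ := Finset.exists_min_image Finset.univ x Finset.univ_nonempty
  refine mem_iUnion.mpr ⟨k, hcube k (mem_univ k), fun j => ⟨hk _ (Finset.mem_univ _), ?_⟩⟩
  linarith [le_abs_self (x (k.succAbove j) - x k), hx (k.succAbove j) k]

theorem volume_diagonalStrip_inter_cube_le (m : ℕ) (L β : ℝ) :
    volume (diagonalStrip (m + 1) β ∩ univ.pi fun _ => Ico 0 L)
      ≤ (m + 1 : ℕ) * (ENNReal.ofReal L * ENNReal.ofReal β ^ m) := by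
  calc volume (diagonalStrip (m + 1) β ∩ univ.pi fun _ => Ico 0 L)
      ≤ ∑ k : Fin (m + 1), volume (slabAbove k L β) :=
        (measure_mono (diagonalStrip_inter_cube_subset m L β)).trans
          (measure_iUnion_fintype_le _ _)
    _ = (m + 1 : ℕ) * (ENNReal.ofReal L * ENNReal.ofReal β ^ m) := by
        simp [volume_slabAbove]

theorem measureReal_pi_cond_diagonalStrip_le (m : ℕ) {L β : ℝ} (hL : 0 < L) (hβ : 0 ≤ β) :
    (Measure.pi fun _ : Fin (m + 1) => volume[|Ico (0 : ℝ) L]).real (diagonalStrip (m + 1) β)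
      ≤ (m + 1) * (β / L) ^ m := by
  have hcube : volume (univ.pi fun _ : Fin (m + 1) => Ico (0 : ℝ) L)
      = ENNReal.ofReal L ^ (m + 1) := by
    simp [volume_pi_pi]
  have hstrip : volume.real (diagonalStrip (m + 1) β ∩ univ.pi fun _ => Ico 0 L)
      ≤ (m + 1) * (L * β ^ m) := by
    have := ENNReal.toReal_mono (by finiteness) (volume_diagonalStrip_inter_cube_le m L β)
    rwa [ENNReal.toReal_mul, ENNReal.toReal_mul, ENNReal.toReal_natCast, ENNReal.toReal_pow,
      ENNReal.toReal_ofReal hL.le, ENNReal.toReal_ofReal hβ, Nat.cast_succ] at this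
  rw [Measure.pi_cond _ fun _ => by simp, ← volume_pi, measureReal_def,
    cond_apply (MeasurableSet.univ_pi fun _ => measurableSet_Ico), hcube, inter_comm,
    ENNReal.toReal_mul, ← measureReal_def]
  calc _ ≤ (L ^ (m + 1))⁻¹ * ((m + 1) * (L * β ^ m)) := by
        simpa [ENNReal.toReal_ofReal hL.le] using mul_le_mul_of_nonneg_left hstrip (by positivity)
    _ = (m + 1) * (β / L) ^ m := by rw [div_pow, pow_succ]; field_simp

theorem abs_integral_pi_cond_le (m : ℕ) {L c α C : ℝ} (hL : 0 < L) (hc : 0 < c)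
    (hα : 0 ≤ α) {F : (Fin (m + 1) → ℝ) → ℝ} (hFC : ∀ x, |F x| ≤ C)
    (hsupp : ∀ x ∉ diagonalStrip (m + 1) α, F x = 0) :
    |∫ y, F (fun i => c * y i) ∂(Measure.pi fun _ => volume[|Ico (0 : ℝ) L])|
      ≤ C * ((m + 1) * (α / (c * L)) ^ m) := by
  have hC : 0 ≤ C := (abs_nonneg _).trans (hFC 0)
  have hvanish : ∀ y ∉ diagonalStrip (m + 1) (α / c), F (fun i => c * y i) = 0 :=
    fun y hy => hsupp _ ((mul_mem_diagonalStrip_iff hc y).not.mpr hy)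
  rw [← setIntegral_eq_integral_of_forall_compl_eq_zero hvanish, ← Real.norm_eq_abs]
  calc _ ≤ C * (Measure.pi fun _ => volume[|Ico (0 : ℝ) L]).real
          (diagonalStrip (m + 1) (α / c)) :=
        norm_setIntegral_le_of_norm_le_const (measure_lt_top _ _) fun y _ => hFC _
    _ ≤ C * ((m + 1) * (α / (c * L)) ^ m) := by
        rw [← div_div]
        exact mul_le_mul_of_nonneg_left
          (measureReal_pi_cond_diagonalStrip_le m hL (by positivity)) hC

theorem isProbabilityMeasure_cond_Ico {L : ℝ} (hL : 0 < L) :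
    IsProbabilityMeasure (volume[|Ico (0 : ℝ) L]) :=
  cond_isProbabilityMeasure_of_finite (by simp [hL]) measure_Ico_lt_top.ne

theorem haarTN_eq_pi (N : ℕ) :
    haarTN N = Measure.pi fun _ => volume[|Ico (0 : ℝ) (2 * Real.pi)] := by
  rw [Measure.pi_cond _ fun _ => measure_Ico_lt_top.ne, ← volume_pi, ProbabilityTheory.cond,
    haarTN]
  simp [volume_pi_pi, ENNReal.ofReal_pow Real.two_pi_pos.le]

theorem integral_Zrv (n N : ℕ) {F : (Fin n → ℝ) → ℝ} (hF : Measurable F) {C : ℝ}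
    (hFC : ∀ x, |F x| ≤ C) :
    ∫ A, Zrv n N F A ∂haarTN N = N.choose n / N *
      ∫ y, F (fun i => N / (2 * Real.pi) * y i)
        ∂(Measure.pi fun _ => volume[|Ico (0 : ℝ) (2 * Real.pi)]) := by
  have := isProbabilityMeasure_cond_Ico Real.two_pi_pos
  set G : (Fin n → ℝ) → ℝ := fun y => F (fun i => N / (2 * Real.pi) * y i)
  have hG : Measurable G := hF.comp (by fun_prop)
  have hmarginal : ∀ e : Fin n → Fin N, Function.Injective e →
      ∫ A, G (A ∘ e) ∂(Measure.pi fun _ => volume[|Ico (0 : ℝ) (2 * Real.pi)])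
        = ∫ y, G y ∂(Measure.pi fun _ => volume[|Ico (0 : ℝ) (2 * Real.pi)]) := fun e he =>
    have hmp := measurePreserving_comp_of_injective (X := ℝ) _ he
    (integral_map hmp.measurable.aemeasurable hG.aestronglyMeasurable).symm.trans
      (by rw [hmp.map_eq])
  calc ∫ A, Zrv n N F A ∂haarTN N
      = 1 / N * ∑ _T ∈ (Finset.powersetCard n (Finset.univ : Finset (Fin N))).attach,
          ∫ y, G y ∂(Measure.pi fun _ => volume[|Ico (0 : ℝ) (2 * Real.pi)]) := by
        rw [haarTN_eq_pi]
        simp only [Zrv]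
        rw [integral_const_mul, integral_finsetSum _ fun T _ => ?integrable]
        · exact congrArg _ (Finset.sum_congr rfl fun T _ =>
            hmarginal _ (Subtype.val_injective.comp (OrderIso.injective _)))
        · exact Integrable.of_bound (hF.comp (by fun_prop)).aestronglyMeasurable C
            (ae_of_all _ fun A => hFC _)
    _ = _ := by simp; ring

theorem choose_div_mul_le (m N : ℕ) {α : ℝ} (hα : 0 ≤ α) :
    (N.choose (m + 1) : ℝ) / N * ((m + 1) * (α / N) ^ m) ≤ α ^ m / m.factorial := by
  rcases N.eq_zero_or_pos with rfl | hN
  · simp only [CharP.cast_eq_zero, div_zero, zero_mul]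
    positivity
  calc (N.choose (m + 1) : ℝ) / N * ((m + 1) * (α / N) ^ m)
      ≤ (N ^ (m + 1) / (m + 1).factorial : ℝ) / N * ((m + 1) * (α / N) ^ m) := by
        gcongr
        exact Nat.choose_le_pow_div _ _
    _ = α ^ m / m.factorial := by
        rw [Nat.factorial_succ, div_pow, pow_succ]
        push_cast
        field_simp

theorem Z_expectation_bound_general (n : ℕ) (hn : 2 ≤ n) (α : ℝ) (hα : 0 < α)
    (F : (Fin n → ℝ) → ℝ) (hFmeas : Measurable F) (hFpos : ∀ x, 0 ≤ F x)
    (C : ℝ) (hC : ∀ x, F x ≤ C)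
    (hsupp : ∀ x : Fin n → ℝ, (∃ i j, α < |x i - x j|) → F x = 0) :
    ∀ N : ℕ, 2 ≤ N →
      |∫ A, Zrv n N F A ∂(haarTN N)| ≤ C * α ^ (n - 1) / (Nat.factorial (n - 1)) := by
  intro N hN
  obtain ⟨m, rfl⟩ : ∃ m, n = m + 1 := ⟨n - 1, by omega⟩
  have hN0 : (0 : ℝ) < N := by exact_mod_cast (by omega : 0 < N)
  have hFC : ∀ x, |F x| ≤ C := fun x => (abs_of_nonneg (hFpos x)).trans_le (hC x)
  have hsupp' : ∀ x ∉ diagonalStrip (m + 1) α, F x = 0 := fun x hx =>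
    hsupp x (by simpa [diagonalStrip] using hx)
  rw [integral_Zrv _ _ hFmeas hFC, abs_mul, abs_of_nonneg (by positivity), Nat.add_sub_cancel]
  calc (N.choose (m + 1) : ℝ) / N * |∫ y, F (fun i => N / (2 * Real.pi) * y i)
        ∂(Measure.pi fun _ => volume[|Ico (0 : ℝ) (2 * Real.pi)])|
      ≤ N.choose (m + 1) / N *
          (C * ((m + 1) * (α / (N / (2 * Real.pi) * (2 * Real.pi))) ^ m)) :=
        mul_le_mul_of_nonneg_left (abs_integral_pi_cond_le m Real.two_pi_pos (by positivity)
          hα.le hFC hsupp') (by positivity)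
    _ = C * (N.choose (m + 1) / N * ((m + 1) * (α / N) ^ m)) := by
        rw [div_mul_cancel₀ _ Real.two_pi_pos.ne']
        ring
    _ ≤ C * α ^ m / m.factorial := by
        rw [mul_div_assoc]
        exact mul_le_mul_of_nonneg_left (choose_div_mul_le m N hα.le)
          ((abs_nonneg _).trans (hFC 0))

/-- **Expectation bound for `Z[n,F,T(N)]`.**  Let `n ≥ 2` and let `F : ℝⁿ → ℝ` be a
nonnegative bounded Borel function, `S_n`-invariant, invariant under diagonal
translations, and supported in `{x : max_{i,j}|x_i - x_j| ≤ α}`.  Then for all `N ≥ 2`,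
`|E(Z[n,F,T(N)])| ≤ ‖F‖_sup · α^{n-1}/(n-1)!`. -/
theorem Z_expectation_bound (n : ℕ) (hn : 2 ≤ n) (α : ℝ) (hα : 0 < α)
    (F : (Fin n → ℝ) → ℝ) (hFmeas : Measurable F) (hFpos : ∀ x, 0 ≤ F x)
    (C : ℝ) (hC : ∀ x, F x ≤ C)
    (hsym : ∀ (σ : Equiv.Perm (Fin n)) (x : Fin n → ℝ), F (x ∘ σ) = F x)
    (htrans : ∀ (t : ℝ) (x : Fin n → ℝ), F (fun i => x i + t) = F x)
    (hsupp : ∀ x : Fin n → ℝ, (∃ i j, α < |x i - x j|) → F x = 0) :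
    ∀ N : ℕ, 2 ≤ N →
      |∫ A, Zrv n N F A ∂(haarTN N)| ≤ C * α ^ (n - 1) / (Nat.factorial (n - 1)) :=
  Z_expectation_bound_general n hn α hα F hFmeas hFpos C hC hsupp
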